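/- arXiv:1611.02465 — 8 statements merged into one kernel-verified Lean document; each statement's English description precedes it below -/
import Mathlib

section
/- Let N be a natural number, β : Fin N → ℝ with β ℓ > 0 for all ℓ, and equip V := Fin N → ℝ³ with the mass-lumped inner product ⟨φ, ψ⟩_h := ∑ ℓ, β ℓ * (φ ℓ ⬝ ψ ℓ). Let k > 0 and m, m', Θ ∈ V, and suppose the midpoint relation holds in variational form: for every φ ∈ V, ⟨(m' − m)/k, φ⟩_h = ∑ ℓ, β ℓ * (((m ℓ + m' ℓ)/2 ×ᵥ Θ ℓ) ⬝ φ ℓ). Then ‖m' ℓ‖ = ‖m ℓ‖ for every node ℓ; consequently ‖m'‖_h = ‖m‖_h and (⨆ ℓ, ‖m' ℓ‖) = (⨆ ℓ, ‖m ℓ‖). -/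
/-!
Because the mass matrix is lumped, testing the variational midpoint relation with a function
supported at a single node gives the nodal equation
`(m' ℓ - m ℓ) / k = ((m ℓ + m' ℓ) / 2) × Θ ℓ`. Its right-hand side is orthogonal to
`m ℓ + m' ℓ`, and `⟪m' ℓ - m ℓ, m ℓ + m' ℓ⟫ = ‖m' ℓ‖² - ‖m ℓ‖²`.
-/

open scoped InnerProductSpace BigOperators

noncomputable section

/-- ℝ³ with the Euclidean norm and inner product. -/
abbrev R3 := EuclideanSpace ℝ (Fin 3)

/-- The cross product on ℝ³. -/
def cross3 (a b : R3) : R3 := WithLp.toLp 2 (crossProduct a b)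

/-- Mass-lumped inner product `⟨φ, ψ⟩_h := ∑ ℓ, β ℓ * (φ ℓ ⬝ ψ ℓ)`. -/
def innh {N : ℕ} (β : Fin N → ℝ) (φ ψ : Fin N → R3) : ℝ :=
  ∑ ℓ, β ℓ * ⟪φ ℓ, ψ ℓ⟫_ℝ

/-- Mass-lumped norm `‖φ‖_h := √⟨φ, φ⟩_h`. -/
def normh {N : ℕ} (β : Fin N → ℝ) (φ : Fin N → R3) : ℝ :=
  Real.sqrt (innh β φ φ)

theorem inner_cross3_self_left (a b : R3) : ⟪cross3 a b, a⟫_ℝ = 0 := by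
  simpa [cross3, PiLp.inner_apply, dotProduct, mul_comm] using dot_self_cross (a : Fin 3 → ℝ) b

theorem sum_mul_inner_pi_single {ι E : Type*} [Fintype ι] [DecidableEq ι]
    [NormedAddCommGroup E] [InnerProductSpace ℝ E] (β : ι → ℝ) (f : ι → E) (i : ι) (v : E) :
    ∑ j, β j * ⟪f j, (Pi.single i v : ι → E) j⟫_ℝ = β i * ⟪f i, v⟫_ℝ := by
  rw [Fintype.sum_eq_single i fun j hj => by simp [hj]]
  simp

theorem eq_of_forall_innh_eq {N : ℕ} {β : Fin N → ℝ} (hβ : ∀ ℓ, β ℓ ≠ 0) {u w : Fin N → R3}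
    (h : ∀ φ, innh β u φ = ∑ ℓ, β ℓ * ⟪w ℓ, φ ℓ⟫_ℝ) : u = w := by
  funext ℓ
  refine ext_inner_right ℝ fun v => ?_
  have hℓ := h (Pi.single ℓ v)
  rw [innh, sum_mul_inner_pi_single, sum_mul_inner_pi_single] at hℓ
  exact mul_left_cancel₀ (hβ ℓ) hℓ

theorem norm_eq_of_midpoint_cross {k : ℝ} (hk : k ≠ 0) {a b c : R3}
    (h : k⁻¹ • (b - a) = cross3 ((2 : ℝ)⁻¹ • (a + b)) c) : ‖b‖ = ‖a‖ := by
  have h0 : ⟪k⁻¹ • (b - a), (2 : ℝ)⁻¹ • (a + b)⟫_ℝ = 0 := h ▸ inner_cross3_self_left _ _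
  rw [real_inner_smul_left, real_inner_smul_right, real_inner_comm, add_comm] at h0
  simpa [hk, real_inner_add_sub_eq_zero_iff] using h0

theorem normh_eq_of_norm_eq {N : ℕ} (β : Fin N → ℝ) {φ ψ : Fin N → R3}
    (h : ∀ ℓ, ‖φ ℓ‖ = ‖ψ ℓ‖) : normh β φ = normh β ψ := by
  simp only [normh, innh, real_inner_self_eq_norm_sq, h]

/-- the implicit midpoint relation conserves the modulus of the
magnetization at every node; consequently the mass-lumped norm and the nodal
sup of the moduli are conserved. -/
theorem stmt1 {N : ℕ} (β : Fin N → ℝ) (hβ : ∀ ℓ, 0 < β ℓ)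
    (k : ℝ) (hk : 0 < k) (m m' Θ : Fin N → R3)
    (hmid : ∀ φ : Fin N → R3,
      innh β (k⁻¹ • (m' - m)) φ
        = ∑ ℓ, β ℓ * ⟪cross3 ((2:ℝ)⁻¹ • (m ℓ + m' ℓ)) (Θ ℓ), φ ℓ⟫_ℝ) :
    (∀ ℓ : Fin N, ‖m' ℓ‖ = ‖m ℓ‖) ∧
      normh β m' = normh β m ∧
      (⨆ ℓ : Fin N, ‖m' ℓ‖) = ⨆ ℓ : Fin N, ‖m ℓ‖ := by
  have hnodal : k⁻¹ • (m' - m) = fun ℓ => cross3 ((2 : ℝ)⁻¹ • (m ℓ + m' ℓ)) (Θ ℓ) :=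
    eq_of_forall_innh_eq (fun ℓ => (hβ ℓ).ne') hmid
  have hnorm : ∀ ℓ, ‖m' ℓ‖ = ‖m ℓ‖ := fun ℓ =>
    norm_eq_of_midpoint_cross hk.ne' (congrFun hnodal ℓ)
  exact ⟨hnorm, normh_eq_of_norm_eq β hnorm, iSup_congr hnorm⟩

end
end

section
/- Let N be a natural number, β : Fin N → ℝ with β ℓ > 0 for all ℓ, and equip V := Fin N → ℝ³ with the mass-lumped inner product ⟨φ, ψ⟩_h := ∑ ℓ, β ℓ * (φ ℓ ⬝ ψ ℓ). Let g : V → V → ℝ be a symmetric bilinear form and D : V → V a map satisfying ⟨D φ, ψ⟩_h = −g φ ψ for all φ, ψ ∈ V. Let C_ex > 0, α > 0, k > 0, and m, m', P ∈ V. Write mid := (m + m')/2 and dt := (m' − m)/k, and suppose the midpoint scheme holds: for all φ ∈ V, ⟨dt, φ⟩_h = −C_ex * ∑ ℓ, β ℓ * ((mid ℓ ×ᵥ (D mid) ℓ) ⬝ φ ℓ) − ∑ ℓ, β ℓ * ((mid ℓ ×ᵥ P ℓ) ⬝ φ ℓ) + α * ∑ ℓ, β ℓ * ((mid ℓ ×ᵥ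 dt ℓ) ⬝ φ ℓ). Then the discrete energy identity holds: (C_ex/(2k)) * (g m' m' − g m m) + α * ‖dt‖_h² = ⟨dt, P⟩_h. -/
/-!
Write `B(φ, ψ) := ⟨mid × φ, ψ⟩_h`, an alternating bilinear form, and `F := C_ex D mid + P`; the
scheme reads `⟨dt, φ⟩_h = -B(F, φ) + α B(dt, φ)`. Testing with `φ = dt` gives
`‖dt‖_h² = B(dt, F)`, and testing with `φ = F` gives `⟨dt, F⟩_h = α B(dt, F) = α ‖dt‖_h²`.
Finally `⟨dt, D mid⟩_h = -g(mid, dt) = -(g(m', m') - g(m, m)) / (2k)` by symmetry of `g`.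
-/

open scoped InnerProductSpace BigOperators

noncomputable section

theorem LinearMap.BilinForm.IsAlt.apply_eq_mul_of_forall {M : Type*} [AddCommGroup M]
    [Module ℝ M] {B : LinearMap.BilinForm ℝ M} (hB : B.IsAlt) (ip : M → M → ℝ) {v F : M} {α : ℝ}
    (h : ∀ φ, ip v φ = -B F φ + α * B v φ) : ip v F = α * ip v v := by
  rw [h F, h v, hB.self_eq_zero, hB.self_eq_zero, ← hB.neg_eq]
  ring

lemma cross3_add_right (a b c : R3) : cross3 a (b + c) = cross3 a b + cross3 a c := by
  simp [cross3, map_add]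

lemma cross3_smul_right (a b : R3) (r : ℝ) : cross3 a (r • b) = r • cross3 a b := by
  simp [cross3, map_smul]

lemma inner_cross3_self_right (a b : R3) : ⟪cross3 a b, b⟫_ℝ = 0 := by
  simp [cross3, EuclideanSpace.inner_eq_star_dotProduct, dot_cross_self]

section MassLumped

variable {N : ℕ} (β : Fin N → ℝ)

def crossForm (w : Fin N → R3) : LinearMap.BilinForm ℝ (Fin N → R3) :=
  LinearMap.mk₂ ℝ (fun φ ψ => ∑ ℓ, β ℓ * ⟪cross3 (w ℓ) (φ ℓ), ψ ℓ⟫_ℝ)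
    (fun φ₁ φ₂ ψ => by
      simp only [Pi.add_apply, cross3_add_right, inner_add_left, mul_add, Finset.sum_add_distrib])
    (fun r φ ψ => by
      simp only [Pi.smul_apply, cross3_smul_right, real_inner_smul_left, smul_eq_mul,
        Finset.mul_sum]
      exact Finset.sum_congr rfl fun ℓ _ => by ring)
    (fun φ ψ₁ ψ₂ => by
      simp only [Pi.add_apply, inner_add_right, mul_add, Finset.sum_add_distrib])
    (fun r φ ψ => by
      simp only [Pi.smul_apply, real_inner_smul_right, smul_eq_mul, Finset.mul_sum]
      exact Finset.sum_congr rfl fun ℓ _ => by ring)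

lemma crossForm_apply (w φ ψ : Fin N → R3) :
    crossForm β w φ ψ = ∑ ℓ, β ℓ * ⟪cross3 (w ℓ) (φ ℓ), ψ ℓ⟫_ℝ :=
  rfl

lemma crossForm_isAlt (w : Fin N → R3) : (crossForm β w).IsAlt := fun φ => by
  simp only [crossForm_apply, inner_cross3_self_right, mul_zero, Finset.sum_const_zero]

lemma innh_comm (φ ψ : Fin N → R3) : innh β φ ψ = innh β ψ φ := by
  simp only [innh, real_inner_comm]

lemma innh_add_smul_right (φ ψ χ : Fin N → R3) (c : ℝ) :
    innh β φ (c • ψ + χ) = c * innh β φ ψ + innh β φ χ := by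
  simp only [innh, Pi.add_apply, Pi.smul_apply, inner_add_right, real_inner_smul_right,
    Finset.mul_sum, ← Finset.sum_add_distrib]
  exact Finset.sum_congr rfl fun ℓ _ => by ring

lemma normh_sq (hβ : ∀ ℓ, 0 ≤ β ℓ) (φ : Fin N → R3) : normh β φ ^ 2 = innh β φ φ :=
  Real.sq_sqrt <| Finset.sum_nonneg fun ℓ _ => mul_nonneg (hβ ℓ) real_inner_self_nonneg

end MassLumped

lemma LinearMap.BilinForm.apply_midpoint_diff_quotient {M : Type*} [AddCommGroup M]
    [Module ℝ M] (g : LinearMap.BilinForm ℝ M) (hg : ∀ u v, g u v = g v u) (k : ℝ) (x y : M) :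
    g ((2:ℝ)⁻¹ • (x + y)) (k⁻¹ • (y - x)) = (2 * k)⁻¹ * (g y y - g x x) := by
  simp only [map_smul, map_add, map_sub, LinearMap.smul_apply, LinearMap.add_apply,
    smul_eq_mul, hg x y, mul_inv]
  ring

theorem stmt3_general {N : ℕ} (β : Fin N → ℝ) (hβ : ∀ ℓ, 0 < β ℓ)
    (g : (Fin N → R3) →ₗ[ℝ] (Fin N → R3) →ₗ[ℝ] ℝ)
    (hg : ∀ u v : Fin N → R3, g u v = g v u)
    (D : (Fin N → R3) → (Fin N → R3))
    (hD : ∀ φ ψ : Fin N → R3, innh β (D φ) ψ = - g φ ψ)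
    (Cex α k : ℝ)
    (m m' P : Fin N → R3)
    (hscheme : ∀ φ : Fin N → R3,
      innh β (k⁻¹ • (m' - m)) φ
        = -Cex * (∑ ℓ, β ℓ *
              ⟪cross3 (((2:ℝ)⁻¹ • (m + m')) ℓ) (D ((2:ℝ)⁻¹ • (m + m')) ℓ), φ ℓ⟫_ℝ)
          - (∑ ℓ, β ℓ * ⟪cross3 (((2:ℝ)⁻¹ • (m + m')) ℓ) (P ℓ), φ ℓ⟫_ℝ)
          + α * (∑ ℓ, β ℓ *
              ⟪cross3 (((2:ℝ)⁻¹ • (m + m')) ℓ) ((k⁻¹ • (m' - m)) ℓ), φ ℓ⟫_ℝ)) :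
    Cex / (2 * k) * (g m' m' - g m m) + α * (normh β (k⁻¹ • (m' - m))) ^ 2
      = innh β (k⁻¹ • (m' - m)) P := by
  set dt := k⁻¹ • (m' - m)
  set mid := (2:ℝ)⁻¹ • (m + m')
  set F := Cex • D mid + P
  have hLLG : ∀ φ, innh β dt φ = -crossForm β mid F φ + α * crossForm β mid dt φ := fun φ => by
    simp only [F, map_add, map_smul, LinearMap.add_apply, LinearMap.smul_apply, smul_eq_mul,
      crossForm_apply, hscheme φ]
    ring
  have hF : innh β dt F = α * innh β dt dt :=
    (crossForm_isAlt β mid).apply_eq_mul_of_forall (innh β) hLLG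
  have hsplit : innh β dt F = -Cex * g mid dt + innh β dt P := by
    rw [innh_add_smul_right, innh_comm, hD]
    ring
  have hgmid : g mid dt = (2 * k)⁻¹ * (g m' m' - g m m) :=
    LinearMap.BilinForm.apply_midpoint_diff_quotient g hg k m m'
  rw [normh_sq β (fun ℓ => (hβ ℓ).le), div_eq_mul_inv]
  linear_combination hsplit - hF - Cex * hgmid

/-- discrete energy identity for one step of the implicit-explicit
midpoint scheme (Lemma 3.3(a)). -/
theorem stmt3 {N : ℕ} (β : Fin N → ℝ) (hβ : ∀ ℓ, 0 < β ℓ)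
    (g : (Fin N → R3) →ₗ[ℝ] (Fin N → R3) →ₗ[ℝ] ℝ)
    (hg : ∀ u v : Fin N → R3, g u v = g v u)
    (D : (Fin N → R3) → (Fin N → R3))
    (hD : ∀ φ ψ : Fin N → R3, innh β (D φ) ψ = - g φ ψ)
    (Cex α k : ℝ) (hCex : 0 < Cex) (hα : 0 < α) (hk : 0 < k)
    (m m' P : Fin N → R3)
    (hscheme : ∀ φ : Fin N → R3,
      innh β (k⁻¹ • (m' - m)) φ
        = -Cex * (∑ ℓ, β ℓ *
              ⟪cross3 (((2:ℝ)⁻¹ • (m + m')) ℓ) (D ((2:ℝ)⁻¹ • (m + m')) ℓ), φ ℓ⟫_ℝ)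
          - (∑ ℓ, β ℓ * ⟪cross3 (((2:ℝ)⁻¹ • (m + m')) ℓ) (P ℓ), φ ℓ⟫_ℝ)
          + α * (∑ ℓ, β ℓ *
              ⟪cross3 (((2:ℝ)⁻¹ • (m + m')) ℓ) ((k⁻¹ • (m' - m)) ℓ), φ ℓ⟫_ℝ)) :
    Cex / (2 * k) * (g m' m' - g m m) + α * (normh β (k⁻¹ • (m' - m))) ^ 2
      = innh β (k⁻¹ • (m' - m)) P :=
  stmt3_general β hβ g hg D hD Cex α k m m' P hscheme

end
end

section
/- Let N be a natural number, β : Fin N → ℝ with β ℓ > 0 for all ℓ, and equip V := Fin N → ℝ³ with the mass-lumped inner product ⟨φ, ψ⟩_h := ∑ ℓ, β ℓ * (φ ℓ ⬝ ψ ℓ). Let g : V → V → ℝ be a symmetric bilinear form and D : V → V a map satisfying ⟨D φ, ψ⟩_h = −g φ ψ for all φ, ψ ∈ V. Let C_ex > 0, α > 0, k > 0, M ≥ 1, and let m : Fin (M+1) → V and P : Fin M → V be such that for every j < M, writing mid_j := (m j + m (j+1))/2 and dt_j := (m (j+1) − m j)/k, the midpoint scheme holds: for all φ ∈ V, ⟨dt_j,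 φ⟩_h = −C_ex * ∑ ℓ, β ℓ * ((mid_j ℓ ×ᵥ (D mid_j) ℓ) ⬝ φ ℓ) − ∑ ℓ, β ℓ * ((mid_j ℓ ×ᵥ (P j) ℓ) ⬝ φ ℓ) + α * ∑ ℓ, β ℓ * ((mid_j ℓ ×ᵥ dt_j ℓ) ⬝ φ ℓ). Then for every i < M: (C_ex/2) * g (m (i+1)) (m (i+1)) + α * k * ∑_{j=0}^{i} ‖dt_j‖_h² = (C_ex/2) * g (m 0) (m 0) + k * ∑_{j=0}^{i} ⟨dt_j, P j⟩_h. -/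
open scoped InnerProductSpace BigOperators

noncomputable section

lemma cross3_sub_right (a b c : R3) : cross3 a (b - c) = cross3 a b - cross3 a c := by
  simp [cross3]

section MassLumped

variable {N : ℕ} (β : Fin N → ℝ)

def crossh (u v : Fin N → R3) : Fin N → R3 := fun ℓ => cross3 (u ℓ) (v ℓ)

lemma innh_add_right (φ ψ χ : Fin N → R3) :
    innh β φ (ψ + χ) = innh β φ ψ + innh β φ χ := by
  simp only [innh, Pi.add_apply, inner_add_right, mul_add, Finset.sum_add_distrib]

lemma innh_sub_right (φ ψ χ : Fin N → R3) :
    innh β φ (ψ - χ) = innh β φ ψ - innh β φ χ := by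
  simp only [innh, Pi.sub_apply, inner_sub_right, mul_sub, Finset.sum_sub_distrib]

lemma innh_smul_right (φ ψ : Fin N → R3) (r : ℝ) :
    innh β φ (r • ψ) = r * innh β φ ψ := by
  simp only [innh, Pi.smul_apply, real_inner_smul_right, Finset.mul_sum]
  exact Finset.sum_congr rfl fun ℓ _ => by ring

lemma innh_add_left (φ ψ χ : Fin N → R3) :
    innh β (φ + ψ) χ = innh β φ χ + innh β ψ χ := by
  rw [innh_comm, innh_add_right, innh_comm, innh_comm β χ]

lemma innh_sub_left (φ ψ χ : Fin N → R3) :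
    innh β (φ - ψ) χ = innh β φ χ - innh β ψ χ := by
  rw [innh_comm, innh_sub_right, innh_comm, innh_comm β χ]

lemma innh_smul_left (φ ψ : Fin N → R3) (r : ℝ) :
    innh β (r • φ) ψ = r * innh β φ ψ := by
  rw [innh_comm, innh_smul_right, innh_comm]

lemma innh_self_nonneg (hβ : ∀ ℓ, 0 ≤ β ℓ) (φ : Fin N → R3) : 0 ≤ innh β φ φ :=
  Finset.sum_nonneg fun ℓ _ => mul_nonneg (hβ ℓ) real_inner_self_nonneg

lemma innh_crossh_self (u v : Fin N → R3) : innh β (crossh u v) v = 0 :=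
  Finset.sum_eq_zero fun ℓ _ => by simp [crossh, inner_cross3_self_right]

lemma crossh_add_right (u v w : Fin N → R3) : crossh u (v + w) = crossh u v + crossh u w :=
  funext fun _ => cross3_add_right _ _ _

lemma crossh_sub_right (u v w : Fin N → R3) : crossh u (v - w) = crossh u v - crossh u w :=
  funext fun _ => cross3_sub_right _ _ _

lemma crossh_smul_right (u v : Fin N → R3) (r : ℝ) : crossh u (r • v) = r • crossh u v :=
  funext fun _ => cross3_smul_right _ _ _

end MassLumped

lemma LinearMap.apply_add_sub_of_symm {M : Type*} [AddCommGroup M] [Module ℝ M]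
    (g : M →ₗ[ℝ] M →ₗ[ℝ] ℝ) (hg : ∀ u v, g u v = g v u) (a b : M) :
    g (a + b) (b - a) = g b b - g a a := by
  simp only [map_add, map_sub, LinearMap.add_apply]
  rw [hg a b]
  ring

section Scheme

variable {N : ℕ} (β : Fin N → ℝ)

lemma scheme_tested_with_field (u v p d : Fin N → R3) (Cex α : ℝ)
    (h : ∀ φ, innh β d φ = -Cex * innh β (crossh u v) φ - innh β (crossh u p) φ
      + α * innh β (crossh u d) φ) :
    -Cex * innh β d v - innh β d p + α * innh β d d = 0 := by
  set w := -Cex • v - p + α • d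
  calc -Cex * innh β d v - innh β d p + α * innh β d d = innh β d w := by
        simp only [w, innh_add_right, innh_sub_right, innh_smul_right]
    _ = innh β (crossh u w) w := by
        simp only [h w, w, crossh_add_right, crossh_sub_right, crossh_smul_right, innh_add_left,
          innh_sub_left, innh_smul_left]
    _ = 0 := innh_crossh_self β u w

theorem energy_step (hβ : ∀ ℓ, 0 ≤ β ℓ) (g : (Fin N → R3) →ₗ[ℝ] (Fin N → R3) →ₗ[ℝ] ℝ)
    (hg : ∀ u v, g u v = g v u) (D : (Fin N → R3) → (Fin N → R3))
    (hD : ∀ φ ψ, innh β (D φ) ψ = - g φ ψ) (Cex α k : ℝ) (hk : k ≠ 0) (a b p : Fin N → R3)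
    (h : ∀ φ, innh β (k⁻¹ • (b - a)) φ
      = -Cex * innh β (crossh ((2:ℝ)⁻¹ • (a + b)) (D ((2:ℝ)⁻¹ • (a + b)))) φ
        - innh β (crossh ((2:ℝ)⁻¹ • (a + b)) p) φ
        + α * innh β (crossh ((2:ℝ)⁻¹ • (a + b)) (k⁻¹ • (b - a))) φ) :
    Cex / 2 * g b b + α * k * normh β (k⁻¹ • (b - a)) ^ 2
      = Cex / 2 * g a a + k * innh β (k⁻¹ • (b - a)) p := by
  have htest := scheme_tested_with_field β _ _ _ _ Cex α h
  have hexchange : innh β (k⁻¹ • (b - a)) (D ((2:ℝ)⁻¹ • (a + b)))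
      = -(k⁻¹ / 2 * (g b b - g a a)) := by
    rw [innh_comm, hD, map_smul, map_smul, LinearMap.smul_apply,
      LinearMap.apply_add_sub_of_symm g hg, smul_eq_mul, smul_eq_mul]
    ring
  rw [hexchange] at htest
  rw [normh_sq β hβ]
  linear_combination k * htest - Cex / 2 * (g b b - g a a) * mul_inv_cancel₀ hk

end Scheme

theorem stmt4_general {N : ℕ} (β : Fin N → ℝ) (hβ : ∀ ℓ, 0 < β ℓ)
    (g : (Fin N → R3) →ₗ[ℝ] (Fin N → R3) →ₗ[ℝ] ℝ)
    (hg : ∀ u v : Fin N → R3, g u v = g v u)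
    (D : (Fin N → R3) → (Fin N → R3))
    (hD : ∀ φ ψ : Fin N → R3, innh β (D φ) ψ = - g φ ψ)
    (Cex α k : ℝ) (hk : 0 < k)
    (M : ℕ)
    (m : Fin (M + 1) → (Fin N → R3)) (P : Fin M → (Fin N → R3))
    (hscheme : ∀ j : Fin M, ∀ φ : Fin N → R3,
      innh β (k⁻¹ • (m j.succ - m j.castSucc)) φ
        = -Cex * (∑ ℓ, β ℓ *
              ⟪cross3 (((2:ℝ)⁻¹ • (m j.castSucc + m j.succ)) ℓ)
                (D ((2:ℝ)⁻¹ • (m j.castSucc + m j.succ)) ℓ), φ ℓ⟫_ℝ)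
          - (∑ ℓ, β ℓ *
              ⟪cross3 (((2:ℝ)⁻¹ • (m j.castSucc + m j.succ)) ℓ) (P j ℓ), φ ℓ⟫_ℝ)
          + α * (∑ ℓ, β ℓ *
              ⟪cross3 (((2:ℝ)⁻¹ • (m j.castSucc + m j.succ)) ℓ)
                ((k⁻¹ • (m j.succ - m j.castSucc)) ℓ), φ ℓ⟫_ℝ)) :
    ∀ i : Fin M,
      Cex / 2 * g (m i.succ) (m i.succ)
          + α * k * ∑ j ∈ Finset.Iic i, (normh β (k⁻¹ • (m j.succ - m j.castSucc))) ^ 2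
        = Cex / 2 * g (m 0) (m 0)
          + k * ∑ j ∈ Finset.Iic i, innh β (k⁻¹ • (m j.succ - m j.castSucc)) (P j) := by
  intro i
  have step (j : Fin M) :
      Cex / 2 * g (m j.succ) (m j.succ) - Cex / 2 * g (m j.castSucc) (m j.castSucc)
        = k * innh β (k⁻¹ • (m j.succ - m j.castSucc)) (P j)
          - α * k * normh β (k⁻¹ • (m j.succ - m j.castSucc)) ^ 2 := by
    -- the three sums in `hscheme j` are `innh β (crossh mid _) φ` by definition
    have := energy_step β (fun ℓ => (hβ ℓ).le) g hg D hD Cex α k hk.ne' _ _ (P j) (hscheme j)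
    linarith
  have telescope := Fin.sum_Iic_sub i fun j => Cex / 2 * g (m j) (m j)
  rw [Finset.sum_congr rfl fun j _ => step j, Finset.sum_sub_distrib] at telescope
  rw [Finset.mul_sum, Finset.mul_sum]
  linarith

/-- telescoped discrete energy equality for the implicit-explicit
midpoint scheme (Lemma 3.3(b)). -/
theorem stmt4 {N : ℕ} (β : Fin N → ℝ) (hβ : ∀ ℓ, 0 < β ℓ)
    (g : (Fin N → R3) →ₗ[ℝ] (Fin N → R3) →ₗ[ℝ] ℝ)
    (hg : ∀ u v : Fin N → R3, g u v = g v u)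
    (D : (Fin N → R3) → (Fin N → R3))
    (hD : ∀ φ ψ : Fin N → R3, innh β (D φ) ψ = - g φ ψ)
    (Cex α k : ℝ) (hCex : 0 < Cex) (hα : 0 < α) (hk : 0 < k)
    (M : ℕ) (hM : 1 ≤ M)
    (m : Fin (M + 1) → (Fin N → R3)) (P : Fin M → (Fin N → R3))
    (hscheme : ∀ j : Fin M, ∀ φ : Fin N → R3,
      innh β (k⁻¹ • (m j.succ - m j.castSucc)) φ
        = -Cex * (∑ ℓ, β ℓ *
              ⟪cross3 (((2:ℝ)⁻¹ • (m j.castSucc + m j.succ)) ℓ)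
                (D ((2:ℝ)⁻¹ • (m j.castSucc + m j.succ)) ℓ), φ ℓ⟫_ℝ)
          - (∑ ℓ, β ℓ *
              ⟪cross3 (((2:ℝ)⁻¹ • (m j.castSucc + m j.succ)) ℓ) (P j ℓ), φ ℓ⟫_ℝ)
          + α * (∑ ℓ, β ℓ *
              ⟪cross3 (((2:ℝ)⁻¹ • (m j.castSucc + m j.succ)) ℓ)
                ((k⁻¹ • (m j.succ - m j.castSucc)) ℓ), φ ℓ⟫_ℝ)) :
    ∀ i : Fin M,
      Cex / 2 * g (m i.succ) (m i.succ)
          + α * k * ∑ j ∈ Finset.Iic i, (normh β (k⁻¹ • (m j.succ - m j.castSucc))) ^ 2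
        = Cex / 2 * g (m 0) (m 0)
          + k * ∑ j ∈ Finset.Iic i, innh β (k⁻¹ • (m j.succ - m j.castSucc)) (P j) :=
  stmt4_general β hβ g hg D hD Cex α k hk M m P hscheme

end
end

section
/- Let N be a natural number, β : Fin N → ℝ with β ℓ > 0 for all ℓ, and equip V := Fin N → ℝ³ with the mass-lumped inner product ⟨φ, ψ⟩_h := ∑ ℓ, β ℓ * (φ ℓ ⬝ ψ ℓ). Let k > 0, α > 0, and h, m ∈ V. Then there exists a unique η ∈ V such that for every φ ∈ V: (2/k) * ⟨η, φ⟩_h + ∑ ℓ, β ℓ * ((η ℓ ×ᵥ h ℓ) ⬝ φ ℓ) + (α/(2k)) * ∑ ℓ, β ℓ * ((η ℓ ×ᵥ m ℓ) ⬝ φ ℓ) = (2/k) * ⟨m, φ⟩_h; moreover this η satisfies ‖η ℓ‖ ≤ ‖m ℓ‖ for every node ℓ, and hence ‖η‖_h ≤ ‖m‖_h. -/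
/-! Testing with nodal functions `φ = Pi.single ℓ v` decouples the system into the 3 × 3 systems
`(2/k) x + x × w = (2/k) m ℓ` with `w = h ℓ + (α/(2k)) m ℓ`. Since `x × w ⟂ x`, testing such a
system with `x` gives `‖x‖² = ⟪m ℓ, x⟫`: the node map is injective, hence bijective, and
Cauchy–Schwarz gives `‖x‖ ≤ ‖m ℓ‖`. -/

open scoped InnerProductSpace BigOperators

noncomputable section

section SkewPerturbation

variable {E : Type*} [NormedAddCommGroup E] [InnerProductSpace ℝ E] {T : E →ₗ[ℝ] E} {c : ℝ}

theorem inner_smul_add_self_of_skew (hT : ∀ x, ⟪T x, x⟫_ℝ = 0) (x : E) :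
    ⟪c • x + T x, x⟫_ℝ = c * ‖x‖ ^ 2 := by
  rw [inner_add_left, real_inner_smul_left, hT, real_inner_self_eq_norm_sq, add_zero]

theorem norm_le_of_smul_add_eq (hT : ∀ x, ⟪T x, x⟫_ℝ = 0) (hc : c ≠ 0) {x m : E}
    (hx : c • x + T x = c • m) : ‖x‖ ≤ ‖m‖ := by
  have hsq : ‖x‖ ^ 2 = ⟪m, x⟫_ℝ := by
    apply mul_left_cancel₀ hc
    rw [← inner_smul_add_self_of_skew hT, hx, real_inner_smul_left]
  have : ‖x‖ ^ 2 ≤ ‖m‖ * ‖x‖ := hsq ▸ real_inner_le_norm m x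
  nlinarith [norm_nonneg x, norm_nonneg m]

theorem existsUnique_smul_add_eq [FiniteDimensional ℝ E] (hT : ∀ x, ⟪T x, x⟫_ℝ = 0)
    (hc : c ≠ 0) (b : E) : ∃! x, c • x + T x = b := by
  have hinj : Function.Injective (c • LinearMap.id + T : E →ₗ[ℝ] E) := by
    refine (injective_iff_map_eq_zero _).2 fun x hx => ?_
    rw [LinearMap.add_apply, LinearMap.smul_apply, LinearMap.id_apply] at hx
    have hsq : c * ‖x‖ ^ 2 = 0 := by
      rw [← inner_smul_add_self_of_skew hT, hx, inner_zero_left]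
    simpa [hc] using hsq
  exact Function.Bijective.existsUnique ⟨hinj, LinearMap.injective_iff_surjective.1 hinj⟩ b

end SkewPerturbation

theorem forall_sum_mul_inner_eq_zero_iff {ι E : Type*} [Fintype ι] [NormedAddCommGroup E]
    [InnerProductSpace ℝ E] {β : ι → ℝ} (hβ : ∀ i, β i ≠ 0) {F : ι → E} :
    (∀ φ : ι → E, ∑ i, β i * ⟪F i, φ i⟫_ℝ = 0) ↔ F = 0 := by
  classical
  refine ⟨fun H => funext fun i => ?_, fun hF φ => by simp [hF]⟩
  have := H (Pi.single i (F i))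
  rw [Finset.sum_eq_single i (fun j _ hj => by simp [hj]) (by simp)] at this
  simpa [hβ i] using this

@[simps]
def cross3Right (w : R3) : R3 →ₗ[ℝ] R3 where
  toFun x := cross3 x w
  map_add' x y := by simp [cross3]
  map_smul' a x := by simp [cross3]

theorem inner_cross3_self (x w : R3) : ⟪cross3 x w, x⟫_ℝ = 0 := by
  simp [cross3, EuclideanSpace.inner_eq_star_dotProduct, dot_self_cross]

theorem normh_le_normh {N : ℕ} {β : Fin N → ℝ} (hβ : ∀ ℓ, 0 ≤ β ℓ) {φ ψ : Fin N → R3}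
    (hφψ : ∀ ℓ, ‖φ ℓ‖ ≤ ‖ψ ℓ‖) : normh β φ ≤ normh β ψ := by
  unfold normh innh
  gcongr with ℓ
  · exact hβ ℓ
  simp only [real_inner_self_eq_norm_sq]
  gcongr
  exact hφψ ℓ

theorem lumped_system_iff_nodewise {N : ℕ} {β : Fin N → ℝ} (hβ : ∀ ℓ, β ℓ ≠ 0) (c γ : ℝ)
    (h m η : Fin N → R3) :
    (∀ φ : Fin N → R3,
        c * innh β η φ + (∑ ℓ, β ℓ * ⟪cross3 (η ℓ) (h ℓ), φ ℓ⟫_ℝ)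
          + γ * (∑ ℓ, β ℓ * ⟪cross3 (η ℓ) (m ℓ), φ ℓ⟫_ℝ) = c * innh β m φ) ↔
      ∀ ℓ, c • η ℓ + (cross3Right (h ℓ) + γ • cross3Right (m ℓ)) (η ℓ) = c • m ℓ := by
  have hres : ∀ φ : Fin N → R3,
      c * innh β η φ + (∑ ℓ, β ℓ * ⟪cross3 (η ℓ) (h ℓ), φ ℓ⟫_ℝ)
          + γ * (∑ ℓ, β ℓ * ⟪cross3 (η ℓ) (m ℓ), φ ℓ⟫_ℝ) - c * innh β m φ
        = ∑ ℓ, β ℓ * ⟪c • η ℓ + (cross3Right (h ℓ) + γ • cross3Right (m ℓ)) (η ℓ)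
            - c • m ℓ, φ ℓ⟫_ℝ := by
    intro φ
    simp only [innh, Finset.mul_sum, ← Finset.sum_add_distrib, ← Finset.sum_sub_distrib]
    refine Finset.sum_congr rfl fun ℓ _ => ?_
    simp only [LinearMap.add_apply, LinearMap.smul_apply, cross3Right_apply, inner_sub_left,
      inner_add_left, real_inner_smul_left]
    ring
  refine (forall_congr' fun φ => by rw [← sub_eq_zero, hres φ]).trans ?_
  rw [forall_sum_mul_inner_eq_zero_iff hβ]
  simp only [funext_iff, Pi.zero_apply, sub_eq_zero]

theorem stmt5_general {N : ℕ} (β : Fin N → ℝ) (hβ : ∀ ℓ, 0 < β ℓ)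
    (k α : ℝ) (hk : 0 < k) (h m : Fin N → R3) :
    (∃! η : Fin N → R3, ∀ φ : Fin N → R3,
        (2 / k) * innh β η φ
          + (∑ ℓ, β ℓ * ⟪cross3 (η ℓ) (h ℓ), φ ℓ⟫_ℝ)
          + (α / (2 * k)) * (∑ ℓ, β ℓ * ⟪cross3 (η ℓ) (m ℓ), φ ℓ⟫_ℝ)
          = (2 / k) * innh β m φ) ∧
    (∀ η : Fin N → R3,
      (∀ φ : Fin N → R3,
        (2 / k) * innh β η φ
          + (∑ ℓ, β ℓ * ⟪cross3 (η ℓ) (h ℓ), φ ℓ⟫_ℝ)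
          + (α / (2 * k)) * (∑ ℓ, β ℓ * ⟪cross3 (η ℓ) (m ℓ), φ ℓ⟫_ℝ)
          = (2 / k) * innh β m φ) →
      (∀ ℓ : Fin N, ‖η ℓ‖ ≤ ‖m ℓ‖) ∧ normh β η ≤ normh β m) := by
  have hc : 2 / k ≠ 0 := by positivity
  set T : Fin N → R3 →ₗ[ℝ] R3 := fun ℓ => cross3Right (h ℓ) + (α / (2 * k)) • cross3Right (m ℓ)
  have hT : ∀ ℓ x, ⟪T ℓ x, x⟫_ℝ = 0 := fun ℓ x => by
    simp [T, inner_add_left, real_inner_smul_left, inner_cross3_self]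
  have hsys := lumped_system_iff_nodewise (fun ℓ => (hβ ℓ).ne') (2 / k) (α / (2 * k)) h m
  refine ⟨?_, fun η hη => ?_⟩
  · choose η hη huniq using fun ℓ => existsUnique_smul_add_eq (hT ℓ) hc ((2 / k) • m ℓ)
    exact ⟨η, (hsys η).2 hη, fun η' hη' => funext fun ℓ => huniq ℓ _ ((hsys η').1 hη' ℓ)⟩
  · have hnode := fun ℓ => norm_le_of_smul_add_eq (hT ℓ) hc ((hsys η).1 hη ℓ)
    exact ⟨hnode, normh_le_normh (fun ℓ => (hβ ℓ).le) hnode⟩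

/-- unique solvability of the linear system of the inner fixed-point
iteration (Remark 5.2(i)), together with the nodewise bound `‖η ℓ‖ ≤ ‖m ℓ‖` and the
mass-lumped norm bound `‖η‖_h ≤ ‖m‖_h` for the solution. -/
theorem stmt5 {N : ℕ} (β : Fin N → ℝ) (hβ : ∀ ℓ, 0 < β ℓ)
    (k α : ℝ) (hk : 0 < k) (hα : 0 < α) (h m : Fin N → R3) :
    (∃! η : Fin N → R3, ∀ φ : Fin N → R3,
        (2 / k) * innh β η φ
          + (∑ ℓ, β ℓ * ⟪cross3 (η ℓ) (h ℓ), φ ℓ⟫_ℝ)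
          + (α / (2 * k)) * (∑ ℓ, β ℓ * ⟪cross3 (η ℓ) (m ℓ), φ ℓ⟫_ℝ)
          = (2 / k) * innh β m φ) ∧
    (∀ η : Fin N → R3,
      (∀ φ : Fin N → R3,
        (2 / k) * innh β η φ
          + (∑ ℓ, β ℓ * ⟪cross3 (η ℓ) (h ℓ), φ ℓ⟫_ℝ)
          + (α / (2 * k)) * (∑ ℓ, β ℓ * ⟪cross3 (η ℓ) (m ℓ), φ ℓ⟫_ℝ)
          = (2 / k) * innh β m φ) →
      (∀ ℓ : Fin N, ‖η ℓ‖ ≤ ‖m ℓ‖) ∧ normh β η ≤ normh β m) :=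
  stmt5_general β hβ k α hk h m
end
end

section
/- Let E be a real normed vector space, M ≥ 1 a natural number, k > 0, and set t_j := j * k for 0 ≤ j ≤ M and T := M * k. Given nodal values m : Fin (M+1) → E, define the piecewise affine interpolant m_k : [0,T) → E by m_k(t) := ((t − t_j)/k) • m (j+1) + ((t_{j+1} − t)/k) • m j for t ∈ [t_j, t_{j+1}), the piecewise constant function m_k⁻(t) := m j for t ∈ [t_j, t_{j+1}), and the piecewise constant derivative ∂m_k(t) := (m (j+1) − m j)/k for t ∈ [t_j, t_{j+1}). Then ∫_0^T ‖m_k(t) − m_k⁻(t)‖² dt ≤ k² * ∫_0^T ‖∂m_k(t)‖² dt. -/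
open scoped BigOperators

noncomputable section

open MeasureTheory intervalIntegral

/-- a.e. agreement on `Ioc a b` from agreement on `Ico a b`. -/
lemma aux_ae_ico {α : Type*} (a b : ℝ) (f g : ℝ → α)
    (h : ∀ t ∈ Set.Ico a b, f t = g t) :
    ∀ᵐ t ∂(volume : Measure ℝ), t ∈ Set.Ioc a b → f t = g t := by
  have hsub : {t : ℝ | ¬ (t ∈ Set.Ioc a b → f t = g t)} ⊆ {b} := by
    intro t ht
    simp only [Set.mem_setOf_eq, Classical.not_imp] at ht
    obtain ⟨⟨h1, h2⟩, hne⟩ := ht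
    by_contra hb
    exact hne (h t ⟨h1.le, lt_of_le_of_ne h2 hb⟩)
  rw [MeasureTheory.ae_iff]
  exact measure_mono_null hsub (measure_singleton b)

/-- with uniform time nodes `t_j = j k`, the piecewise affine interpolant
`m_k` and the left piecewise constant interpolant `m_k⁻` of nodal values `m` differ in
`L²(0,T)` by at most `k` times the `L²`-norm of the piecewise constant discrete time
derivative `∂m_k`. -/
theorem stmt7 {E : Type*} [NormedAddCommGroup E] [NormedSpace ℝ E]
    (M : ℕ) (hM : 1 ≤ M) (k : ℝ) (hk : 0 < k)
    (m : Fin (M + 1) → E) (mk mkm dmk : ℝ → E)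
    (hmk : ∀ j : Fin M, ∀ t ∈ Set.Ico ((j : ℝ) * k) (((j : ℝ) + 1) * k),
      mk t = ((t - (j : ℝ) * k) / k) • m j.succ
             + ((((j : ℝ) + 1) * k - t) / k) • m j.castSucc)
    (hmkm : ∀ j : Fin M, ∀ t ∈ Set.Ico ((j : ℝ) * k) (((j : ℝ) + 1) * k),
      mkm t = m j.castSucc)
    (hdmk : ∀ j : Fin M, ∀ t ∈ Set.Ico ((j : ℝ) * k) (((j : ℝ) + 1) * k),
      dmk t = k⁻¹ • (m j.succ - m j.castSucc)) :
    ∫ t in (0:ℝ)..((M : ℝ) * k), ‖mk t - mkm t‖ ^ 2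
      ≤ k ^ 2 * ∫ t in (0:ℝ)..((M : ℝ) * k), ‖dmk t‖ ^ 2 := by
  set a : ℕ → ℝ := fun n => (n : ℝ) * k with ha
  have hastep : ∀ j : ℕ, a j < a (j + 1) := by
    intro j
    simp only [ha]
    push_cast
    nlinarith
  set d : ℕ → ℝ := fun j =>
    if h : j < M then ‖m (⟨j, h⟩ : Fin M).succ - m (⟨j, h⟩ : Fin M).castSucc‖ ^ 2 else 0
    with hd
  -- affine difference on each subinterval
  have key' : ∀ i : Fin M, ∀ t ∈ Set.Ico ((i : ℝ) * k) (((i : ℝ) + 1) * k),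
      mk t - mkm t = ((t - (i : ℝ) * k) / k) • (m i.succ - m i.castSucc) := by
    intro i t ht
    rw [hmk i t ht, hmkm i t ht]
    have hcoef : (((i : ℝ) + 1) * k - t) / k = 1 - (t - (i : ℝ) * k) / k := by
      field_simp
      ring
    rw [hcoef, sub_smul, one_smul, smul_sub]
    abel
  have hmem : ∀ (j : ℕ) (hj : j < M), ∀ t ∈ Set.Ico (a j) (a (j + 1)),
      t ∈ Set.Ico (((⟨j, hj⟩ : Fin M) : ℝ) * k) ((((⟨j, hj⟩ : Fin M) : ℝ) + 1) * k) := by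
    intro j hj t ht
    simpa [ha, add_mul] using ht
  have key : ∀ (j : ℕ), j < M → ∀ t ∈ Set.Ico (a j) (a (j + 1)),
      ‖mk t - mkm t‖ ^ 2 = ((t - a j) / k) ^ 2 * d j := by
    intro j hj t ht
    rw [key' ⟨j, hj⟩ t (hmem j hj t ht), norm_smul, mul_pow, Real.norm_eq_abs, sq_abs]
    simp only [hd, hj, dif_pos, ha, Fin.val_mk]
  have keyd : ∀ (j : ℕ), j < M → ∀ t ∈ Set.Ico (a j) (a (j + 1)),
      ‖dmk t‖ ^ 2 = k⁻¹ ^ 2 * d j := by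
    intro j hj t ht
    rw [hdmk ⟨j, hj⟩ t (hmem j hj t ht), norm_smul, mul_pow, Real.norm_eq_abs, sq_abs]
    simp only [hd, hj, dif_pos]
  have hcontφ : ∀ j : ℕ, Continuous fun t : ℝ => ((t - a j) / k) ^ 2 * d j := fun j =>
    ((((continuous_id.sub continuous_const).div_const k).pow 2).mul continuous_const)
  -- integrability on each piece
  have hintf : ∀ j < M, IntervalIntegrable (fun t => ‖mk t - mkm t‖ ^ 2) volume (a j) (a (j+1)) := by
    intro j hj
    have hcont : IntervalIntegrable (fun t => ((t - a j) / k) ^ 2 * d j) volume (a j) (a (j+1)) :=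
      (hcontφ j).intervalIntegrable _ _
    rw [intervalIntegrable_iff_integrableOn_Ioc_of_le (hastep j).le] at hcont ⊢
    refine hcont.congr ((ae_restrict_iff' measurableSet_Ioc).2 ?_)
    filter_upwards [aux_ae_ico (a j) (a (j+1)) _ _ (key j hj)] with t h1 h2
    exact (h1 h2).symm
  have hintg : ∀ j < M, IntervalIntegrable (fun t => ‖dmk t‖ ^ 2) volume (a j) (a (j+1)) := by
    intro j hj
    have hcont : IntervalIntegrable (fun _ : ℝ => k⁻¹ ^ 2 * d j) volume (a j) (a (j+1)) :=
      intervalIntegrable_const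
    rw [intervalIntegrable_iff_integrableOn_Ioc_of_le (hastep j).le] at hcont ⊢
    refine hcont.congr ((ae_restrict_iff' measurableSet_Ioc).2 ?_)
    filter_upwards [aux_ae_ico (a j) (a (j+1)) _ _ (keyd j hj)] with t h1 h2
    exact (h1 h2).symm
  -- split into sums over subintervals
  have hsumf : ∑ j ∈ Finset.range M, (∫ t in (a j)..(a (j+1)), ‖mk t - mkm t‖ ^ 2)
      = ∫ t in (a 0)..(a M), ‖mk t - mkm t‖ ^ 2 :=
    intervalIntegral.sum_integral_adjacent_intervals hintf
  have hsumg : ∑ j ∈ Finset.range M, (∫ t in (a j)..(a (j+1)), ‖dmk t‖ ^ 2)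
      = ∫ t in (a 0)..(a M), ‖dmk t‖ ^ 2 :=
    intervalIntegral.sum_integral_adjacent_intervals hintg
  have ha0 : a 0 = 0 := by simp [ha]
  have haM : a M = (M : ℝ) * k := by simp [ha]
  rw [← ha0, ← haM, ← hsumf, ← hsumg, Finset.mul_sum]
  apply Finset.sum_le_sum
  intro j hj
  rw [Finset.mem_range] at hj
  have hdnn : 0 ≤ d j := by
    simp only [hd, hj, dif_pos]
    positivity
  have hlen : a (j+1) - a j = k := by
    simp only [ha]
    push_cast
    ring
  have h1 : (∫ t in (a j)..(a (j+1)), ‖mk t - mkm t‖ ^ 2)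
      = ∫ t in (a j)..(a (j+1)), ((t - a j) / k) ^ 2 * d j := by
    apply intervalIntegral.integral_congr_ae
    rw [Set.uIoc_of_le (hastep j).le]
    exact aux_ae_ico _ _ _ _ (key j hj)
  have h2 : (∫ t in (a j)..(a (j+1)), ‖dmk t‖ ^ 2)
      = ∫ t in (a j)..(a (j+1)), (k⁻¹ ^ 2 * d j : ℝ) := by
    apply intervalIntegral.integral_congr_ae
    rw [Set.uIoc_of_le (hastep j).le]
    exact aux_ae_ico _ _ _ _ (keyd j hj)
  rw [h1, h2, intervalIntegral.integral_const, smul_eq_mul]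
  have h3 : (∫ t in (a j)..(a (j+1)), ((t - a j) / k) ^ 2 * d j)
      ≤ ∫ t in (a j)..(a (j+1)), (d j : ℝ) := by
    apply intervalIntegral.integral_mono_on (hastep j).le
    · exact (hcontφ j).intervalIntegrable _ _
    · exact intervalIntegrable_const
    · intro t ht
      have h4 : 0 ≤ (t - a j) / k := div_nonneg (by linarith [ht.1]) hk.le
      have h5 : (t - a j) / k ≤ 1 := by
        rw [div_le_one hk]
        have := ht.2
        linarith [hlen]
      have h6 : ((t - a j) / k) ^ 2 ≤ 1 := by nlinarith
      exact mul_le_of_le_one_left hdnn h6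
  calc (∫ t in (a j)..(a (j+1)), ((t - a j) / k) ^ 2 * d j)
      ≤ ∫ t in (a j)..(a (j+1)), (d j : ℝ) := h3
    _ = k * d j := by rw [intervalIntegral.integral_const, smul_eq_mul, hlen]
    _ = k ^ 2 * ((a (j+1) - a j) * (k⁻¹ ^ 2 * d j)) := by
        rw [hlen]
        field_simp
end
end

section
/- Let H be a real inner product space, g : H → H → ℝ a symmetric bilinear form, and π : H →ₗ H a self-adjoint linear map, i.e. ⟨π u, v⟩ = ⟨u, π v⟩ for all u, v ∈ H. Let C_ex > 0, k > 0, and define the energy E(u, φ) := (C_ex/2) * g u u − (1/2) * ⟨π u, u⟩ − ⟨φ, u⟩. Let m, m', f, f', Π, f½ ∈ H and a ∈ ℝ, and assume the discrete energy identity (C_ex/(2k)) * (g m' m' − g m m) + a = ⟨(m' − m)/k, Π + f½⟩. Then E(m', f') − E(m, f) + k * a + k * ⟨(f' − f)/k, (m + m')/2⟩ = k * ⟨(m' − m)/k, Π − π ((m + m')/2)⟩ + k * ⟨(m' − m)/k, f½ − (f + f')/2⟩. -/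
open scoped InnerProductSpace

/-! Multiplying the discrete energy identity by `k` turns the exchange increment plus `k a`
into `⟪m' - m, Π + f½⟫`. The two remaining increments of the energy are rewritten as pairings
with midpoint averages: for the applied field by the discrete product rule, and for `⟪π u, u⟫`
as `⟪m' - m, π (m + m')⟫`, which needs `π` to be self-adjoint. -/

section MidpointRule

variable {E : Type*} [NormedAddCommGroup E] [InnerProductSpace ℝ E]

theorem two_mul_real_inner_sub_real_inner (x x' y y' : E) :
    2 * (⟪x', y'⟫_ℝ - ⟪x, y⟫_ℝ) = ⟪x' - x, y + y'⟫_ℝ + ⟪y' - y, x + x'⟫_ℝ := by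
  rw [inner_add_right, inner_add_right, inner_sub_left, inner_sub_left, inner_sub_left,
    inner_sub_left, real_inner_comm x y, real_inner_comm x y', real_inner_comm x' y,
    real_inner_comm x' y']
  ring

theorem LinearMap.IsSymmetric.inner_map_self_sub_inner_map_self {T : E →ₗ[ℝ] E}
    (hT : T.IsSymmetric) (u v : E) :
    ⟪T v, v⟫_ℝ - ⟪T u, u⟫_ℝ = ⟪v - u, T (u + v)⟫_ℝ := by
  have hswap : ⟪v, T u⟫_ℝ = ⟪u, T v⟫_ℝ := by rw [← hT, real_inner_comm]
  rw [map_add, inner_add_right, inner_sub_left, inner_sub_left, hswap,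
    real_inner_comm v (T v), real_inner_comm u (T u)]
  ring

theorem mul_real_inner_inv_smul_left {k : ℝ} (hk : k ≠ 0) (x y : E) :
    k * ⟪k⁻¹ • x, y⟫_ℝ = ⟪x, y⟫_ℝ := by
  rw [real_inner_smul_left, mul_inv_cancel_left₀ hk]

end MidpointRule

theorem stmt9_general {H : Type*} [NormedAddCommGroup H] [InnerProductSpace ℝ H]
    (g : H →ₗ[ℝ] H →ₗ[ℝ] ℝ)
    (π : H →ₗ[ℝ] H) (hπ : ∀ u v : H, ⟪π u, v⟫_ℝ = ⟪u, π v⟫_ℝ)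
    (Cex k : ℝ) (hk : 0 < k)
    (m m' f f' Pih fh : H) (a : ℝ)
    (hE : Cex / (2 * k) * (g m' m' - g m m) + a = ⟪k⁻¹ • (m' - m), Pih + fh⟫_ℝ) :
    (Cex / 2 * g m' m' - (1 / 2) * ⟪π m', m'⟫_ℝ - ⟪f', m'⟫_ℝ)
        - (Cex / 2 * g m m - (1 / 2) * ⟪π m, m⟫_ℝ - ⟪f, m⟫_ℝ)
        + k * a
        + k * ⟪k⁻¹ • (f' - f), (2:ℝ)⁻¹ • (m + m')⟫_ℝ
      = k * ⟪k⁻¹ • (m' - m), Pih - π ((2:ℝ)⁻¹ • (m + m'))⟫_ℝ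
        + k * ⟪k⁻¹ • (m' - m), fh - (2:ℝ)⁻¹ • (f + f')⟫_ℝ := by
  have hk0 : k ≠ 0 := hk.ne'
  have hstep : Cex / 2 * (g m' m' - g m m) + k * a = ⟪m' - m, Pih + fh⟫_ℝ := by
    rw [← mul_real_inner_inv_smul_left hk0, ← hE]
    field_simp
  have hquad := LinearMap.IsSymmetric.inner_map_self_sub_inner_map_self hπ m m'
  have hfield := two_mul_real_inner_sub_real_inner f f' m m'
  rw [inner_add_right] at hstep
  rw [mul_real_inner_inv_smul_left hk0, mul_real_inner_inv_smul_left hk0,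
    mul_real_inner_inv_smul_left hk0, inner_sub_right, inner_sub_right, map_smul,
    real_inner_smul_right, real_inner_smul_right, real_inner_smul_right]
  linear_combination hstep - hquad / 2 - hfield / 2

/-- the per-time-step energy balance of the midpoint scheme
(from the proof of Theorem 3.1(c)). Here `E(u, φ) := (C_ex/2) g u u − ½⟨π u, u⟩ − ⟨φ, u⟩`
is written out explicitly, `Pih` plays the role of `Π`, and `fh` that of `f^{i+1/2}`. -/
theorem stmt9 {H : Type*} [NormedAddCommGroup H] [InnerProductSpace ℝ H]
    (g : H →ₗ[ℝ] H →ₗ[ℝ] ℝ) (hg : ∀ u v : H, g u v = g v u)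
    (π : H →ₗ[ℝ] H) (hπ : ∀ u v : H, ⟪π u, v⟫_ℝ = ⟪u, π v⟫_ℝ)
    (Cex k : ℝ) (hCex : 0 < Cex) (hk : 0 < k)
    (m m' f f' Pih fh : H) (a : ℝ)
    (hE : Cex / (2 * k) * (g m' m' - g m m) + a = ⟪k⁻¹ • (m' - m), Pih + fh⟫_ℝ) :
    (Cex / 2 * g m' m' - (1 / 2) * ⟪π m', m'⟫_ℝ - ⟪f', m'⟫_ℝ)
        - (Cex / 2 * g m m - (1 / 2) * ⟪π m, m⟫_ℝ - ⟪f, m⟫_ℝ)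
        + k * a
        + k * ⟪k⁻¹ • (f' - f), (2:ℝ)⁻¹ • (m + m')⟫_ℝ
      = k * ⟪k⁻¹ • (m' - m), Pih - π ((2:ℝ)⁻¹ • (m + m'))⟫_ℝ
        + k * ⟪k⁻¹ • (m' - m), fh - (2:ℝ)⁻¹ • (f + f')⟫_ℝ :=
  stmt9_general g π hπ Cex k hk m m' f f' Pih fh a hE
end

section
/- Let H be a real inner product space, g : H → H → ℝ a symmetric bilinear form, and π : H →ₗ H a self-adjoint linear map, i.e. ⟨π u, v⟩ = ⟨u, π v⟩ for all u, v ∈ H. Let C_ex > 0, k > 0, M ≥ 1, define the energy E(u, φ) := (C_ex/2) * g u u − (1/2) * ⟨π u, u⟩ − ⟨φ, u⟩, and let m, f : Fin (M+1) → H, Π, f½ : Fin M → H, and a : Fin M → ℝ be such that for every j < M the discrete energy identity (C_ex/(2k)) * (g (m (j+1)) (m (j+1)) − g (m j) (m j)) + a j = ⟨(m (j+1) − m j)/k, Π j + f½ j⟩ holds. Then for every i < M: E(m (i+1), f (i+1)) + k * ∑_{j=0}^{i} a j + k * ∑_{j=0}^{i} ⟨(f (j+1) − f j)/k, (m j + m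 (j+1))/2⟩ = E(m 0, f 0) + k * ∑_{j=0}^{i} ⟨(m (j+1) − m j)/k, Π j − π ((m j + m (j+1))/2)⟩ + k * ∑_{j=0}^{i} ⟨(m (j+1) − m j)/k, f½ j − (f j + f (j+1))/2⟩. -/
/-!
Multiplying the scheme's identity by `k` gives the exchange part of
`E(m^{j+1}, f^{j+1}) - E(m^j, f^j)`. For the remaining parts, symmetry of `π` gives
`½(⟨π m^{j+1}, m^{j+1}⟩ - ⟨π m^j, m^j⟩) = ⟨m^{j+1} - m^j, π m^{j+1/2}⟩`, and the field term obeys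
the discrete product rule `⟨f', m'⟩ - ⟨f, m⟩ = ⟨f' - f, (m + m')/2⟩ + ⟨m' - m, (f + f')/2⟩`.
The resulting one-step energy identity telescopes over `j ≤ i`.
-/

open scoped InnerProductSpace BigOperators

noncomputable section

section

variable {H : Type*} [NormedAddCommGroup H] [InnerProductSpace ℝ H]

def energy (g : H →ₗ[ℝ] H →ₗ[ℝ] ℝ) (π : H →ₗ[ℝ] H) (Cex : ℝ) (u φ : H) : ℝ :=
  Cex / 2 * g u u - (1 / 2) * ⟪π u, u⟫_ℝ - ⟪φ, u⟫_ℝ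

theorem LinearMap.IsSymmetric.half_inner_map_self_sub {π : H →ₗ[ℝ] H} (hπ : π.IsSymmetric)
    (u v : H) :
    (1 / 2) * (⟪π v, v⟫_ℝ - ⟪π u, u⟫_ℝ) = ⟪v - u, π ((2:ℝ)⁻¹ • (u + v))⟫_ℝ := by
  have hcross : ⟪π v, u⟫_ℝ = ⟪π u, v⟫_ℝ := by rw [hπ, real_inner_comm]
  simp only [map_smul, map_add, inner_smul_right, inner_add_right, inner_sub_left,
    real_inner_comm (π _) u, real_inner_comm (π _) v]
  linarith

theorem inner_sub_inner_eq_midpoint (φ ψ u v : H) :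
    ⟪ψ, v⟫_ℝ - ⟪φ, u⟫_ℝ
      = ⟪ψ - φ, (2:ℝ)⁻¹ • (u + v)⟫_ℝ + ⟪v - u, (2:ℝ)⁻¹ • (φ + ψ)⟫_ℝ := by
  simp only [inner_smul_right, inner_add_right, inner_sub_left, inner_sub_right,
    real_inner_comm u, real_inner_comm v]
  ring

theorem mul_inner_inv_smul_left {k : ℝ} (hk : k ≠ 0) (w z : H) :
    k * ⟪k⁻¹ • w, z⟫_ℝ = ⟪w, z⟫_ℝ := by
  rw [real_inner_smul_left, mul_inv_cancel_left₀ hk]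

theorem energy_sub_energy_of_step (g : H →ₗ[ℝ] H →ₗ[ℝ] ℝ) {π : H →ₗ[ℝ] H}
    (hπ : π.IsSymmetric) {Cex k a : ℝ} (hk : k ≠ 0) {u v φ ψ P F : H}
    (hstep : Cex / (2 * k) * (g v v - g u u) + a = ⟪k⁻¹ • (v - u), P + F⟫_ℝ) :
    energy g π Cex v ψ - energy g π Cex u φ
      = k * ⟪k⁻¹ • (v - u), P - π ((2:ℝ)⁻¹ • (u + v))⟫_ℝ
        + k * ⟪k⁻¹ • (v - u), F - (2:ℝ)⁻¹ • (φ + ψ)⟫_ℝ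
        - k * a - k * ⟪k⁻¹ • (ψ - φ), (2:ℝ)⁻¹ • (u + v)⟫_ℝ := by
  have hexchange : Cex / 2 * (g v v - g u u) + k * a = ⟪v - u, P + F⟫_ℝ := by
    rw [← mul_inner_inv_smul_left hk, ← hstep]
    field_simp
  simp only [mul_inner_inv_smul_left hk]
  simp only [inner_sub_right, inner_add_right] at hexchange ⊢
  unfold energy
  linear_combination hexchange - hπ.half_inner_map_self_sub u v
    - inner_sub_inner_eq_midpoint φ ψ u v

end

theorem stmt10_general {H : Type*} [NormedAddCommGroup H] [InnerProductSpace ℝ H]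
    (g : H →ₗ[ℝ] H →ₗ[ℝ] ℝ)
    (π : H →ₗ[ℝ] H) (hπ : ∀ u v : H, ⟪π u, v⟫_ℝ = ⟪u, π v⟫_ℝ)
    (Cex k : ℝ) (hk : 0 < k)
    (M : ℕ)
    (m f : Fin (M + 1) → H) (Pih fh : Fin M → H) (a : Fin M → ℝ)
    (hE : ∀ j : Fin M,
      Cex / (2 * k) * (g (m j.succ) (m j.succ) - g (m j.castSucc) (m j.castSucc)) + a j
        = ⟪k⁻¹ • (m j.succ - m j.castSucc), Pih j + fh j⟫_ℝ) :
    ∀ i : Fin M,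
      (Cex / 2 * g (m i.succ) (m i.succ)
          - (1 / 2) * ⟪π (m i.succ), m i.succ⟫_ℝ - ⟪f i.succ, m i.succ⟫_ℝ)
        + k * ∑ j ∈ Finset.Iic i, a j
        + k * ∑ j ∈ Finset.Iic i,
            ⟪k⁻¹ • (f j.succ - f j.castSucc), (2:ℝ)⁻¹ • (m j.castSucc + m j.succ)⟫_ℝ
      = (Cex / 2 * g (m 0) (m 0) - (1 / 2) * ⟪π (m 0), m 0⟫_ℝ - ⟪f 0, m 0⟫_ℝ)
        + k * ∑ j ∈ Finset.Iic i,
            ⟪k⁻¹ • (m j.succ - m j.castSucc),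
              Pih j - π ((2:ℝ)⁻¹ • (m j.castSucc + m j.succ))⟫_ℝ
        + k * ∑ j ∈ Finset.Iic i,
            ⟪k⁻¹ • (m j.succ - m j.castSucc),
              fh j - (2:ℝ)⁻¹ • (f j.castSucc + f j.succ)⟫_ℝ := by
  intro i
  have htelescope := Fin.sum_Iic_sub i fun n ↦ energy g π Cex (m n) (f n)
  rw [Finset.sum_congr rfl fun j _ ↦ energy_sub_energy_of_step g hπ hk.ne' (hE j)] at htelescope
  simp only [Finset.sum_sub_distrib, Finset.sum_add_distrib, ← Finset.mul_sum] at htelescope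
  unfold energy at htelescope
  linear_combination -htelescope

/-- the telescoped discrete energy balance of the midpoint scheme
(from the proof of Theorem 3.1(c)). Here `E(u, φ) := (C_ex/2) g u u − ½⟨π u, u⟩ − ⟨φ, u⟩`
is written out explicitly, `Pih j` plays the role of `Π^j`, `fh j` that of `f^{j+1/2}`,
and `a j` that of the damping term `α‖d_t m^j‖²_h`. -/
theorem stmt10 {H : Type*} [NormedAddCommGroup H] [InnerProductSpace ℝ H]
    (g : H →ₗ[ℝ] H →ₗ[ℝ] ℝ) (hg : ∀ u v : H, g u v = g v u)
    (π : H →ₗ[ℝ] H) (hπ : ∀ u v : H, ⟪π u, v⟫_ℝ = ⟪u, π v⟫_ℝ)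
    (Cex k : ℝ) (hCex : 0 < Cex) (hk : 0 < k)
    (M : ℕ) (hM : 1 ≤ M)
    (m f : Fin (M + 1) → H) (Pih fh : Fin M → H) (a : Fin M → ℝ)
    (hE : ∀ j : Fin M,
      Cex / (2 * k) * (g (m j.succ) (m j.succ) - g (m j.castSucc) (m j.castSucc)) + a j
        = ⟪k⁻¹ • (m j.succ - m j.castSucc), Pih j + fh j⟫_ℝ) :
    ∀ i : Fin M,
      (Cex / 2 * g (m i.succ) (m i.succ)
          - (1 / 2) * ⟪π (m i.succ), m i.succ⟫_ℝ - ⟪f i.succ, m i.succ⟫_ℝ)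
        + k * ∑ j ∈ Finset.Iic i, a j
        + k * ∑ j ∈ Finset.Iic i,
            ⟪k⁻¹ • (f j.succ - f j.castSucc), (2:ℝ)⁻¹ • (m j.castSucc + m j.succ)⟫_ℝ
      = (Cex / 2 * g (m 0) (m 0) - (1 / 2) * ⟪π (m 0), m 0⟫_ℝ - ⟪f 0, m 0⟫_ℝ)
        + k * ∑ j ∈ Finset.Iic i,
            ⟪k⁻¹ • (m j.succ - m j.castSucc),
              Pih j - π ((2:ℝ)⁻¹ • (m j.castSucc + m j.succ))⟫_ℝ
        + k * ∑ j ∈ Finset.Iic i,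
            ⟪k⁻¹ • (m j.succ - m j.castSucc),
              fh j - (2:ℝ)⁻¹ • (f j.castSucc + f j.succ)⟫_ℝ :=
  stmt10_general g π hπ Cex k hk M m f Pih fh a hE

end
end

section
/- Let z₀, z₁, z₂, z₃ ∈ ℝ³ be affinely independent points, let K be their convex hull, let vol(K) denote its Lebesgue measure, and let φ : ℝ³ → ℝ³ be an affine map. Then ∫_K ‖φ(x)‖² dx ≤ (vol(K)/4) * ∑_{i=0}^{3} ‖φ(z_i)‖² ≤ 5 * ∫_K ‖φ(x)‖² dx. -/
/-!
Pull `K` back to the reference tetrahedron `{y ≥ 0, y₀ + y₁ + y₂ ≤ 1}` by the affine map `A`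
sending its vertices to the `zᵢ`. The Jacobian of `A` is constant, so
`∫_K g² = 6 vol(K) ∫_ref (g ∘ A)²`, and for affine `g` with vertex values `vᵢ` an iterated
integration gives `∫_ref (g ∘ A)² = (∑ vᵢ² + (∑ vᵢ)²) / 120`; this is the P1 mass matrix
`vol(K) (1 + δᵢⱼ) / 20`. Summing over the components of `φ`,
`∫_K ‖φ‖² = vol(K) / 20 * (∑ ‖φ zᵢ‖² + ‖∑ φ zᵢ‖²)`, and both inequalities follow from
`0 ≤ ‖∑ φ zᵢ‖² ≤ 4 ∑ ‖φ zᵢ‖²`.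
-/

open scoped BigOperators
open MeasureTheory

noncomputable section

open Set

section IteratedIntegrals

open Polynomial

lemma intervalIntegral_eq_eval_sub_eval {f : ℝ → ℝ} (P : ℝ[X])
    (hP : ∀ x, P.derivative.eval x = f x) (a b : ℝ) :
    ∫ x in a..b, f x = P.eval b - P.eval a := by
  simp_rw [← hP]
  exact intervalIntegral.integral_eq_sub_of_hasDerivAt (fun x _ => P.hasDerivAt x)
    (P.derivative.continuous.intervalIntegrable a b)

-- Each antiderivative below is minus the closed formula itself on `[x, r]`: the integral over
-- the part of the simplex beyond the slice at `x`.
lemma integral_sq_affine_segment (p w s : ℝ) :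
    ∫ c in (0:ℝ)..s, (p + w * c) ^ 2 = s / 6 * (p ^ 2 + (p + w * s) ^ 2 + (2 * p + w * s) ^ 2) := by
  rw [intervalIntegral_eq_eval_sub_eval
    (-(C s - X) * C (1 / 6) * ((C p + C w * X) ^ 2 + C ((p + w * s) ^ 2)
      + (C p + C w * X + C (p + w * s)) ^ 2)) (fun c => by
        simp only [derivative_mul, derivative_add, derivative_sub, derivative_neg, derivative_pow,
          derivative_C, derivative_X, eval_mul, eval_add, eval_sub, eval_neg, eval_pow, eval_C,
          eval_X, eval_one, eval_zero]
        ring)]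
  simp only [eval_mul, eval_add, eval_sub, eval_neg, eval_pow, eval_C, eval_X]
  ring

lemma integral_sq_affine_triangle (p u w r : ℝ) :
    ∫ b in (0:ℝ)..r, ∫ c in (0:ℝ)..(r - b), (p + u * b + w * c) ^ 2
      = r ^ 2 / 24 * (p ^ 2 + (p + u * r) ^ 2 + (p + w * r) ^ 2 + (3 * p + u * r + w * r) ^ 2) := by
  simp_rw [integral_sq_affine_segment]
  rw [intervalIntegral_eq_eval_sub_eval
    (-(C r - X) ^ 2 * C (1 / 24) * ((C p + C u * X) ^ 2 + C ((p + u * r) ^ 2)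
      + (C p + C u * X + C w * (C r - X)) ^ 2
      + (C p + C u * X + C (p + u * r) + (C p + C u * X + C w * (C r - X))) ^ 2)) (fun c => by
        simp only [derivative_mul, derivative_add, derivative_sub, derivative_neg, derivative_pow,
          derivative_C, derivative_X, eval_mul, eval_add, eval_sub, eval_neg, eval_pow, eval_C,
          eval_X, eval_one, eval_zero]
        ring)]
  simp only [eval_mul, eval_add, eval_sub, eval_neg, eval_pow, eval_C, eval_X]
  ring

lemma integral_sq_affine_tetrahedron (p t u w : ℝ) :
    ∫ a in (0:ℝ)..1, ∫ b in (0:ℝ)..(1 - a), ∫ c in (0:ℝ)..(1 - a - b),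
        (p + t * a + u * b + w * c) ^ 2
      = (p ^ 2 + (p + t) ^ 2 + (p + u) ^ 2 + (p + w) ^ 2 + (4 * p + t + u + w) ^ 2) / 120 := by
  simp_rw [integral_sq_affine_triangle]
  rw [intervalIntegral_eq_eval_sub_eval
    (-(1 - X) ^ 3 * C (1 / 120) * ((C p + C t * X) ^ 2 + C ((p + t) ^ 2)
      + (C p + C t * X + C u * (1 - X)) ^ 2 + (C p + C t * X + C w * (1 - X)) ^ 2
      + (C p + C t * X + C (p + t) + (C p + C t * X + C u * (1 - X))
          + (C p + C t * X + C w * (1 - X))) ^ 2)) (fun c => by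
        simp only [derivative_mul, derivative_add, derivative_sub, derivative_neg, derivative_pow,
          derivative_C, derivative_X, derivative_one, eval_mul, eval_add, eval_sub, eval_neg,
          eval_pow, eval_C, eval_X, eval_one, eval_zero]
        ring)]
  simp only [eval_mul, eval_add, eval_sub, eval_neg, eval_pow, eval_C, eval_X, eval_one]
  ring

end IteratedIntegrals

lemma setIntegral_eq_intervalIntegral_fiber {β : Type*} [MeasureSpace β]
    [SFinite (volume : Measure β)] {r : ℝ} (hr : 0 ≤ r) {S : ℝ → Set β} {f : ℝ × β → ℝ}
    (hS : MeasurableSet {p : ℝ × β | p.1 ∈ Icc 0 r ∧ p.2 ∈ S p.1})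
    (hf : IntegrableOn f {p : ℝ × β | p.1 ∈ Icc 0 r ∧ p.2 ∈ S p.1}) :
    ∫ p in {p : ℝ × β | p.1 ∈ Icc 0 r ∧ p.2 ∈ S p.1}, f p = ∫ a in 0..r, ∫ q in S a, f (a, q) := by
  set T := {p : ℝ × β | p.1 ∈ Icc 0 r ∧ p.2 ∈ S p.1}
  have hfiber (a : ℝ) :
      ∫ q, T.indicator f (a, q) = (Icc 0 r).indicator (fun a => ∫ q in S a, f (a, q)) a := by
    by_cases ha : a ∈ Icc 0 r
    · have hSa : Prod.mk a ⁻¹' T = S a := by ext q; exact ⟨And.right, fun h => ⟨ha, h⟩⟩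
      rw [indicator_of_mem ha, ← integral_indicator (hSa ▸ measurable_prodMk_left hS), ← hSa]
      rfl
    · simp [T, indicator, ha]
  rw [← integral_indicator hS, Measure.volume_eq_prod,
    integral_prod _ ((integrable_indicator_iff hS).2 hf)]
  simp_rw [hfiber]
  rw [integral_indicator measurableSet_Icc, intervalIntegral.integral_of_le hr,
    integral_Icc_eq_integral_Ioc]

def stdTriangle (r : ℝ) : Set (ℝ × ℝ) := {q | q.1 ∈ Icc 0 r ∧ q.2 ∈ Icc 0 (r - q.1)}

def stdTetrahedron : Set (ℝ × ℝ × ℝ) := {p | p.1 ∈ Icc 0 1 ∧ p.2 ∈ stdTriangle (1 - p.1)}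

lemma measurableSet_stdTriangle (r : ℝ) : MeasurableSet (stdTriangle r) := by
  unfold stdTriangle; simp only [mem_Icc]; measurability

lemma measurableSet_stdTetrahedron : MeasurableSet stdTetrahedron := by
  unfold stdTetrahedron stdTriangle; simp only [mem_Icc, mem_ofPred_eq]; measurability

lemma setIntegral_stdTetrahedron {f : ℝ × ℝ × ℝ → ℝ} (hf : Continuous f) :
    ∫ p in stdTetrahedron, f p
      = ∫ a in 0..1, ∫ b in 0..(1 - a), ∫ c in 0..(1 - a - b), f (a, b, c) := by
  have hbox : stdTetrahedron ⊆ Icc 0 1 := by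
    rintro ⟨a, b, c⟩ ⟨⟨ha0, ha1⟩, ⟨hb0, hb1⟩, hc0, hc1⟩
    exact ⟨⟨ha0, hb0, hc0⟩, ⟨ha1, show b ≤ 1 by linarith, show c ≤ 1 by linarith⟩⟩
  refine (setIntegral_eq_intervalIntegral_fiber (S := fun a => stdTriangle (1 - a)) zero_le_one
    measurableSet_stdTetrahedron (hf.integrableOn_Icc.mono_set hbox)).trans
    (intervalIntegral.integral_congr fun a ha => ?_)
  rw [uIcc_of_le zero_le_one, mem_Icc] at ha
  have htri : stdTriangle (1 - a) ⊆ Icc 0 1 := by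
    rintro ⟨b, c⟩ ⟨⟨hb0, hb1⟩, hc0, hc1⟩
    exact ⟨⟨hb0, hc0⟩, ⟨show b ≤ 1 by linarith, show c ≤ 1 by linarith⟩⟩
  refine (setIntegral_eq_intervalIntegral_fiber (r := 1 - a) (S := fun b => Icc 0 (1 - a - b))
    (by linarith) (measurableSet_stdTriangle _)
    ((hf.comp (Continuous.prodMk_right a)).integrableOn_Icc.mono_set htri)).trans
    (intervalIntegral.integral_congr fun b hb => ?_)
  rw [uIcc_of_le (by linarith), mem_Icc] at hb
  rw [integral_Icc_eq_integral_Ioc, intervalIntegral.integral_of_le (by linarith)]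
  rfl

section Simplex

variable {n : ℕ} {E : Type*} [AddCommGroup E] [Module ℝ E]

def refSimplex (n : ℕ) : Set (EuclideanSpace ℝ (Fin n)) := {y | (∀ i, 0 ≤ y i) ∧ ∑ i, y i ≤ 1}

def refVertex (n : ℕ) : Fin (n + 1) → EuclideanSpace ℝ (Fin n) :=
  Fin.cons 0 fun k => EuclideanSpace.single k 1

lemma measurableSet_refSimplex : MeasurableSet (refSimplex n) := by
  unfold refSimplex; measurability

lemma convex_refSimplex : Convex ℝ (refSimplex n) := by
  rintro x ⟨hx0, hx1⟩ y ⟨hy0, hy1⟩ a b ha hb hab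
  refine ⟨fun i => ?_, ?_⟩
  · simp only [PiLp.add_apply, PiLp.smul_apply, smul_eq_mul]
    exact add_nonneg (mul_nonneg ha (hx0 i)) (mul_nonneg hb (hy0 i))
  · simp only [PiLp.add_apply, PiLp.smul_apply, smul_eq_mul, Finset.sum_add_distrib,
      ← Finset.mul_sum]
    nlinarith

lemma convexHull_range_refVertex : convexHull ℝ (range (refVertex n)) = refSimplex n := by
  refine (convexHull_min ?_ convex_refSimplex).antisymm fun y hy => ?_
  · rintro _ ⟨i, rfl⟩
    refine Fin.cases ⟨fun j => ?_, ?_⟩ (fun k => ⟨fun j => ?_, ?_⟩) i <;>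
      simp [refVertex, ite_nonneg]
  · let w : Fin (n + 1) → ℝ := Fin.cons (1 - ∑ i, y i) fun k => y k
    have hw0 (i : Fin (n + 1)) : 0 ≤ w i := by
      induction i using Fin.cases with
      | zero => simpa [w] using hy.2
      | succ k => simpa [w] using hy.1 k
    have hw1 : ∑ i, w i = 1 := by simp [w, Fin.sum_univ_succ]
    have hwy : ∑ i, w i • refVertex n i = y := by
      simpa [w, Fin.sum_univ_succ, refVertex, EuclideanSpace.basisFun_apply] using
        (EuclideanSpace.basisFun (Fin n) ℝ).sum_repr y
    exact mem_convexHull_of_exists_fintype w _ hw0 hw1 (fun i => mem_range_self i) hwy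

def simplexEdgeMap (z : Fin (n + 1) → E) : EuclideanSpace ℝ (Fin n) →ₗ[ℝ] E :=
  Fintype.linearCombination ℝ (fun j => z j.succ - z 0) ∘ₗ
    (WithLp.linearEquiv 2 ℝ (Fin n → ℝ)).toLinearMap

def simplexMap (z : Fin (n + 1) → E) : EuclideanSpace ℝ (Fin n) →ᵃ[ℝ] E :=
  (simplexEdgeMap z).toAffineMap + AffineMap.const ℝ _ (z 0)

lemma simplexMap_apply (z : Fin (n + 1) → E) (y : EuclideanSpace ℝ (Fin n)) :
    simplexMap z y = ∑ j, y j • (z j.succ - z 0) + z 0 := by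
  simp [simplexMap, simplexEdgeMap, Fintype.linearCombination_apply]

lemma simplexMap_refVertex (z : Fin (n + 1) → E) (i : Fin (n + 1)) :
    simplexMap z (refVertex n i) = z i := by
  refine Fin.cases ?_ (fun k => ?_) i <;> simp [simplexMap_apply, refVertex]

lemma image_simplexMap_refSimplex (z : Fin (n + 1) → E) :
    simplexMap z '' refSimplex n = convexHull ℝ (range z) := by
  rw [← convexHull_range_refVertex, AffineMap.image_convexHull, ← range_comp,
    show simplexMap z ∘ refVertex n = z from funext (simplexMap_refVertex z)]

lemma AffineMap.apply_simplexMap {F : Type*} [AddCommGroup F] [Module ℝ F] (g : E →ᵃ[ℝ] F)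
    (z : Fin (n + 1) → E) (y : EuclideanSpace ℝ (Fin n)) :
    g (simplexMap z y) = simplexMap (g ∘ z) y := by
  rw [simplexMap_apply, simplexMap_apply, ← vadd_eq_add, g.map_vadd, map_sum]
  simp only [map_smul, ← vsub_eq_sub, g.linearMap_vsub, vadd_eq_add, Function.comp_apply]

lemma simplexEdgeMap_injective {z : Fin (n + 1) → E} (hz : AffineIndependent ℝ z) :
    Function.Injective (simplexEdgeMap z) := by
  have hli := ((affineIndependent_iff_linearIndependent_vsub ℝ z 0).1 hz).comp
    (fun j : Fin n => (⟨j.succ, j.succ_ne_zero⟩ : {i // i ≠ (0 : Fin (n + 1))}))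
    fun _ _ h => Fin.succ_injective _ (congrArg Subtype.val h)
  exact hli.fintypeLinearCombination_injective.comp (WithLp.linearEquiv 2 ℝ (Fin n → ℝ)).injective

lemma simplexMap_injective {z : Fin (n + 1) → E} (hz : AffineIndependent ℝ z) :
    Function.Injective (simplexMap z) :=
  (add_left_injective (z 0)).comp (simplexEdgeMap_injective hz)

end Simplex

section ChangeOfVariables

variable {n : ℕ} {z : Fin (n + 1) → EuclideanSpace ℝ (Fin n)}

lemma setIntegral_convexHull_eq {F : Type*} [NormedAddCommGroup F] [NormedSpace ℝ F]
    (hz : AffineIndependent ℝ z) (f : EuclideanSpace ℝ (Fin n) → F) :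
    ∫ x in convexHull ℝ (range z), f x
      = |LinearMap.det (simplexEdgeMap z)| • ∫ y in refSimplex n, f (simplexMap z y) := by
  set L := LinearMap.toContinuousLinearMap (simplexEdgeMap z)
  have hderiv (y) : HasFDerivWithinAt (simplexMap z) L (refSimplex n) y :=
    (L.hasFDerivAt.add_const (z 0)).hasFDerivWithinAt
  rw [← image_simplexMap_refSimplex, integral_image_eq_integral_abs_det_fderiv_smul volume
    measurableSet_refSimplex (fun y _ => hderiv y)
    (simplexMap_injective hz).injOn, integral_smul]
  rfl

lemma measureReal_convexHull_eq (hz : AffineIndependent ℝ z) :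
    volume.real (convexHull ℝ (range z))
      = |LinearMap.det (simplexEdgeMap z)| * volume.real (refSimplex n) := by
  simpa using setIntegral_convexHull_eq hz fun _ => (1 : ℝ)

end ChangeOfVariables

section Tetrahedron

def finThreeMeasurableEquiv : R3 ≃ᵐ ℝ × ℝ × ℝ :=
  (MeasurableEquiv.toLp 2 (Fin 3 → ℝ)).symm.trans
    ((MeasurableEquiv.piFinSuccAbove (fun _ => ℝ) 0).trans
      (MeasurableEquiv.prodCongr (MeasurableEquiv.refl ℝ) MeasurableEquiv.finTwoArrow))

lemma measurePreserving_finThreeMeasurableEquiv :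
    MeasurePreserving finThreeMeasurableEquiv volume volume :=
  (((MeasurePreserving.id volume).prod (volume_preserving_finTwoArrow ℝ)).comp
    (volume_preserving_piFinSuccAbove (fun _ => ℝ) 0)).comp
    (EuclideanSpace.volume_preserving_symm_measurableEquiv_toLp (Fin 3))

lemma finThreeMeasurableEquiv_apply (y : R3) : finThreeMeasurableEquiv y = (y 0, y 1, y 2) := rfl

lemma finThreeMeasurableEquiv_preimage_stdTetrahedron :
    finThreeMeasurableEquiv ⁻¹' stdTetrahedron = refSimplex 3 := by
  ext y
  simp only [mem_preimage, finThreeMeasurableEquiv_apply, stdTetrahedron, stdTriangle, refSimplex,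
    mem_ofPred_eq, mem_Icc, Fin.sum_univ_three]
  constructor
  · rintro ⟨⟨h0, -⟩, ⟨h1, -⟩, h2, h3⟩
    exact ⟨fun i => by fin_cases i <;> assumption, by linarith⟩
  · rintro ⟨hy, h3⟩
    have := hy 0; have := hy 1; have := hy 2
    exact ⟨⟨hy 0, by linarith⟩, ⟨hy 1, by linarith⟩, hy 2, by linarith⟩

lemma setIntegral_refSimplex_three (f : ℝ × ℝ × ℝ → ℝ) :
    ∫ y in refSimplex 3, f (y 0, y 1, y 2) = ∫ p in stdTetrahedron, f p := by
  rw [← finThreeMeasurableEquiv_preimage_stdTetrahedron]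
  exact measurePreserving_finThreeMeasurableEquiv.setIntegral_preimage_emb
    finThreeMeasurableEquiv.measurableEmbedding f stdTetrahedron

lemma integral_sq_simplexMap_refSimplex (v : Fin 4 → ℝ) :
    ∫ y in refSimplex 3, simplexMap v y ^ 2 = (∑ i, v i ^ 2 + (∑ i, v i) ^ 2) / 120 := by
  have hv (y : R3) :
      simplexMap v y = v 0 + (v 1 - v 0) * y 0 + (v 2 - v 0) * y 1 + (v 3 - v 0) * y 2 := by
    simp only [simplexMap_apply, smul_eq_mul, Fin.sum_univ_three, Fin.succ_zero_eq_one,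
      Fin.succ_one_eq_two, Fin.reduceSucc]
    ring
  simp_rw [hv]
  rw [setIntegral_refSimplex_three
      fun p => (v 0 + (v 1 - v 0) * p.1 + (v 2 - v 0) * p.2.1 + (v 3 - v 0) * p.2.2) ^ 2,
    setIntegral_stdTetrahedron (by fun_prop), integral_sq_affine_tetrahedron,
    Fin.sum_univ_four, Fin.sum_univ_four]
  ring

lemma measureReal_refSimplex_three : volume.real (refSimplex 3) = 1 / 6 := by
  have := integral_sq_simplexMap_refSimplex fun _ => 1
  norm_num [simplexMap_apply] at this
  exact this

end Tetrahedron

section Lumping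

variable {z : Fin 4 → R3}

lemma integral_sq_affineMap_convexHull (hz : AffineIndependent ℝ z) (g : R3 →ᵃ[ℝ] ℝ) :
    ∫ x in convexHull ℝ (range z), g x ^ 2
      = volume.real (convexHull ℝ (range z)) / 20 * (∑ i, g (z i) ^ 2 + (∑ i, g (z i)) ^ 2) := by
  rw [setIntegral_convexHull_eq hz, measureReal_convexHull_eq hz, measureReal_refSimplex_three]
  simp_rw [g.apply_simplexMap]
  rw [integral_sq_simplexMap_refSimplex, smul_eq_mul]
  simp only [Function.comp_apply]
  ring

lemma integral_norm_sq_affineMap_convexHull {ι : Type*} [Fintype ι] (hz : AffineIndependent ℝ z)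
    (φ : R3 →ᵃ[ℝ] EuclideanSpace ℝ ι) :
    ∫ x in convexHull ℝ (range z), ‖φ x‖ ^ 2
      = volume.real (convexHull ℝ (range z)) / 20
        * (∑ i, ‖φ (z i)‖ ^ 2 + ‖∑ i, φ (z i)‖ ^ 2) := by
  have hcoord (k : ι) : ∫ x in convexHull ℝ (range z), φ x k ^ 2
      = volume.real (convexHull ℝ (range z)) / 20
        * (∑ i, φ (z i) k ^ 2 + (∑ i, φ (z i) k) ^ 2) :=
    integral_sq_affineMap_convexHull hz
      ((EuclideanSpace.proj k : EuclideanSpace ℝ ι →L[ℝ] ℝ).toLinearMap.toAffineMap.comp φ)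
  have hφ := φ.continuous_of_finiteDimensional
  have hint (k : ι) : IntegrableOn (fun x => φ x k ^ 2) (convexHull ℝ (range z)) :=
    (by fun_prop : Continuous fun x => φ x k ^ 2).continuousOn.integrableOn_compact
      ((finite_range z).isCompact_convexHull ℝ)
  simp_rw [EuclideanSpace.real_norm_sq_eq]
  rw [integral_finsetSum _ fun k _ => hint k, Finset.sum_congr rfl fun k _ => hcoord k,
    ← Finset.mul_sum, Finset.sum_add_distrib, Finset.sum_comm]
  simp [WithLp.ofLp_sum]

end Lumping

/-- elementwise mass-lumping norm equivalence on a tetrahedron: for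
affinely independent `z₀, …, z₃` with convex hull `K` and an affine map `φ`,
`∫_K ‖φ‖² ≤ (vol K / 4) ∑ᵢ ‖φ(zᵢ)‖² ≤ 5 ∫_K ‖φ‖²`. -/
theorem stmt14 (z : Fin 4 → R3) (hz : AffineIndependent ℝ z)
    (φ : R3 →ᵃ[ℝ] R3) :
    (∫ x in convexHull ℝ (Set.range z), ‖φ x‖ ^ 2
        ≤ (volume (convexHull ℝ (Set.range z))).toReal / 4 * ∑ i : Fin 4, ‖φ (z i)‖ ^ 2) ∧
    ((volume (convexHull ℝ (Set.range z))).toReal / 4 * ∑ i : Fin 4, ‖φ (z i)‖ ^ 2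
        ≤ 5 * ∫ x in convexHull ℝ (Set.range z), ‖φ x‖ ^ 2) := by
  rw [← measureReal_def, integral_norm_sq_affineMap_convexHull hz φ]
  set V := volume.real (convexHull ℝ (range z))
  set S := ∑ i, ‖φ (z i)‖ ^ 2
  set T := ‖∑ i, φ (z i)‖ ^ 2
  have hV : 0 ≤ V := measureReal_nonneg
  have hT : T ≤ 4 * S := calc
    T ≤ (∑ i, ‖φ (z i)‖) ^ 2 := pow_le_pow_left₀ (norm_nonneg _) (norm_sum_le _ _) 2
    _ ≤ 4 * S := by simpa using sq_sum_le_card_mul_sum_sq (s := Finset.univ) (f := (‖φ <| z ·‖))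
  constructor
  · calc V / 20 * (S + T) ≤ V / 20 * (S + 4 * S) := by gcongr
      _ = V / 4 * S := by ring
  · calc V / 4 * S ≤ V / 4 * S + V / 4 * T := le_add_of_nonneg_right (by positivity)
      _ = 5 * (V / 20 * (S + T)) := by ring

end
end
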